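/- The 3-diameter of the unit ball of ℍ is attained at cube roots of unity on any slice: for every I ∈ 𝕊 and every u ∈ ℍ with |u| = 1, setting α_j = u·(cos(2πj/3) + I·sin(2πj/3)) for j = 1,2,3, one has d₃(𝔹) = (|α₂ − α₁|·|α₃ − α₁|·|α₃ − α₂|)^{1/3}; in particular d₃(𝔹) = √3. -/

import Mathlib

noncomputable section

open Filter Metric Set

local notation "ℍ" => Quaternion ℝ

/-- The `n`-diameter of a subset `E ⊆ ℍ`:
`d_n(E) = sup_{w₁,…,w_n ∈ E} (∏_{1 ≤ j < k ≤ n} |w_k − w_j|)^{2/(n(n−1))}`. -/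
def nDiamReal (n : ℕ) (E : Set ℍ) : ℝ :=
  sSup {x : ℝ | ∃ w : Fin n → ℍ, (∀ i, w i ∈ E) ∧
    x = (∏ p ∈ Finset.univ.filter (fun p : Fin n × Fin n => p.1 < p.2), ‖w p.2 - w p.1‖) ^
      (2 / ((n : ℝ) * ((n : ℝ) - 1)))}

/-!
For `a, b, c` in the closed unit ball of a real inner product space,
`‖b - a‖² + ‖c - a‖² + ‖c - b‖² = 3 (‖a‖² + ‖b‖² + ‖c‖²) - ‖a + b + c‖² ≤ 9`, so by AM-GM the
product of the three squared distances is at most `27`, i.e. `d₃(𝔹) ≤ √3`. Any slice of `ℍ` is an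
isometric copy of `ℂ`, in which the points `α_j` form an equilateral triangle inscribed in the unit
circle, with side `√3`; shrinking it by a factor `r < 1` puts it inside `𝔹`, so the bound is sharp.
-/

theorem Finset.prod_filter_fin_three_lt {M : Type*} [CommMonoid M] (f : Fin 3 × Fin 3 → M) :
    ∏ p ∈ Finset.univ.filter (fun p : Fin 3 × Fin 3 => p.1 < p.2), f p
      = f (0, 1) * f (0, 2) * f (1, 2) := by
  have h : Finset.univ.filter (fun p : Fin 3 × Fin 3 => p.1 < p.2) = {(0, 1), (0, 2), (1, 2)} := by
    decide
  rw [h, Finset.prod_insert (by decide), Finset.prod_insert (by decide), Finset.prod_singleton,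
    mul_assoc]

theorem nDiamReal_three (E : Set ℍ) :
    nDiamReal 3 E = sSup {x : ℝ | ∃ w : Fin 3 → ℍ, (∀ i, w i ∈ E) ∧
      x = (‖w 1 - w 0‖ * ‖w 2 - w 0‖ * ‖w 2 - w 1‖) ^ ((1 : ℝ) / 3)} := by
  have hexp : 2 / (((3 : ℕ) : ℝ) * (((3 : ℕ) : ℝ) - 1)) = (1 : ℝ) / 3 := by norm_num
  simp only [nDiamReal, Finset.prod_filter_fin_three_lt, hexp]

theorem Real.pow_three_rpow_one_div_three {t : ℝ} (ht : 0 ≤ t) : (t ^ 3) ^ ((1 : ℝ) / 3) = t := by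
  simpa using Real.pow_rpow_inv_natCast ht three_ne_zero

theorem mul_mul_le_of_add_add_le_nine {x y z : ℝ} (hx : 0 ≤ x) (hy : 0 ≤ y) (hz : 0 ≤ z)
    (h : x + y + z ≤ 9) : x * y * z ≤ 27 := by
  have amgm : 27 * (x * y * z) ≤ (x + y + z) ^ 3 := by
    nlinarith [mul_nonneg hz (sq_nonneg (x - y)), mul_nonneg hx (sq_nonneg (y - z)),
      mul_nonneg hy (sq_nonneg (x - z)), mul_nonneg (mul_nonneg hx hy) hz]
  nlinarith [pow_le_pow_left₀ (by positivity) h 3]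

section InnerProductSpace

variable {E : Type*} [NormedAddCommGroup E] [InnerProductSpace ℝ E]

theorem norm_sub_sq_add_norm_sub_sq_add_norm_sub_sq (a b c : E) :
    ‖b - a‖ ^ 2 + ‖c - a‖ ^ 2 + ‖c - b‖ ^ 2
      = 3 * (‖a‖ ^ 2 + ‖b‖ ^ 2 + ‖c‖ ^ 2) - ‖a + b + c‖ ^ 2 := by
  simp only [← real_inner_self_eq_norm_sq, inner_add_left, inner_add_right, inner_sub_left,
    inner_sub_right, real_inner_comm a b, real_inner_comm a c, real_inner_comm b c]
  ring

theorem norm_sub_mul_norm_sub_mul_norm_sub_le {a b c : E} (ha : ‖a‖ ≤ 1) (hb : ‖b‖ ≤ 1)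
    (hc : ‖c‖ ≤ 1) : ‖b - a‖ * ‖c - a‖ * ‖c - b‖ ≤ Real.sqrt 3 ^ 3 := by
  have hsum : ‖b - a‖ ^ 2 + ‖c - a‖ ^ 2 + ‖c - b‖ ^ 2 ≤ 9 := by
    rw [norm_sub_sq_add_norm_sub_sq_add_norm_sub_sq]
    nlinarith [norm_nonneg a, norm_nonneg b, norm_nonneg c, sq_nonneg ‖a + b + c‖]
  have hsq : (‖b - a‖ * ‖c - a‖ * ‖c - b‖) ^ 2 ≤ (Real.sqrt 3 ^ 3) ^ 2 := by
    rw [← pow_mul, show 3 * 2 = 2 * 3 from rfl, pow_mul, Real.sq_sqrt (by norm_num)]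
    norm_num only
    simpa only [mul_pow] using
      mul_mul_le_of_add_add_le_nine (sq_nonneg _) (sq_nonneg _) (sq_nonneg _) hsum
  exact le_of_sq_le_sq hsq (by positivity)

end InnerProductSpace

theorem nDiamReal_three_ball_eq_sqrt_three {a b c : ℍ} (ha : ‖a‖ ≤ 1) (hb : ‖b‖ ≤ 1)
    (hc : ‖c‖ ≤ 1) (habc : ‖b - a‖ * ‖c - a‖ * ‖c - b‖ = Real.sqrt 3 ^ 3) :
    nDiamReal 3 (ball 0 1) = Real.sqrt 3 := by
  have hs3 : 0 < Real.sqrt 3 := by positivity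
  rw [nDiamReal_three]
  refine csSup_eq_of_forall_le_of_forall_lt_exists_gt
    ⟨_, fun _ => 0, fun _ => mem_ball_self one_pos, rfl⟩ ?_ ?_
  · rintro x ⟨w, hw, rfl⟩
    simp only [mem_ball_zero_iff] at hw
    calc (‖w 1 - w 0‖ * ‖w 2 - w 0‖ * ‖w 2 - w 1‖) ^ ((1 : ℝ) / 3)
        ≤ (Real.sqrt 3 ^ 3) ^ ((1 : ℝ) / 3) := by
          gcongr
          exact norm_sub_mul_norm_sub_mul_norm_sub_le (hw 0).le (hw 1).le (hw 2).le
      _ = Real.sqrt 3 := Real.pow_three_rpow_one_div_three hs3.le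
  · intro y hy
    obtain ⟨r, hr, hr1⟩ := exists_between (max_lt ((div_lt_one hs3).2 hy) one_pos)
    have hr0 : 0 < r := (le_max_right _ _).trans_lt hr
    have hyr : y < r * Real.sqrt 3 := (div_lt_iff₀ hs3).1 ((le_max_left _ _).trans_lt hr)
    have hmem : ∀ q : ℍ, ‖q‖ ≤ 1 → r • q ∈ ball (0 : ℍ) 1 := fun q hq => by
      rw [mem_ball_zero_iff, norm_smul, Real.norm_of_nonneg hr0.le]
      nlinarith [norm_nonneg q]
    refine ⟨_, ⟨![r • a, r • b, r • c], ?_, rfl⟩, ?_⟩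
    · intro i
      fin_cases i <;> simp [hmem, ha, hb, hc]
    · simp only [Matrix.cons_val_zero, Matrix.cons_val_one, Matrix.cons_val_two, Matrix.head_cons,
        Matrix.tail_cons, ← smul_sub, norm_smul, Real.norm_of_nonneg hr0.le]
      rwa [show r * ‖b - a‖ * (r * ‖c - a‖) * (r * ‖c - b‖) = (r * Real.sqrt 3) ^ 3 by
        rw [mul_pow, ← habc]; ring, Real.pow_three_rpow_one_div_three (by positivity)]

section Slice

variable {I : ℍ}

theorem Quaternion.normSq_eq_one_of_sq_eq_neg_one (hI : I ^ 2 = -1) : normSq I = 1 := by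
  have h : normSq I ^ 2 = 1 := by simpa using congrArg normSq hI
  exact (pow_eq_one_iff_of_nonneg (normSq_nonneg) two_ne_zero).1 h

theorem Quaternion.re_eq_zero_of_sq_eq_neg_one (hI : I ^ 2 = -1) : I.re = 0 :=
  sq_eq_neg_normSq.1 (by simp [hI, normSq_eq_one_of_sq_eq_neg_one hI])

theorem Quaternion.norm_sq_coe_add_smul_of_sq_eq_neg_one (hI : I ^ 2 = -1) (a b : ℝ) :
    ‖(a : ℍ) + b • I‖ ^ 2 = a ^ 2 + b ^ 2 := by
  have h1 := normSq_eq_one_of_sq_eq_neg_one hI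
  have h0 := re_eq_zero_of_sq_eq_neg_one hI
  rw [sq, ← normSq_eq_norm_mul_self]
  rw [normSq_def'] at h1 ⊢
  simp only [re_add, imI_add, imJ_add, imK_add, re_coe, imI_coe, imJ_coe, imK_coe, re_smul,
    imI_smul, imJ_smul, imK_smul, smul_eq_mul, h0] at h1 ⊢
  linear_combination b ^ 2 * h1

theorem Quaternion.norm_sq_mul_sub_mul_of_sq_eq_neg_one (hI : I ^ 2 = -1) {u : ℍ} (hu : ‖u‖ = 1)
    (x y : ℝ) :
    ‖u * ((Real.cos x : ℍ) + Real.sin x • I) - u * ((Real.cos y : ℍ) + Real.sin y • I)‖ ^ 2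
      = 2 - 2 * Real.cos (x - y) := by
  rw [← mul_sub, norm_mul, hu, one_mul,
    show (Real.cos x : ℍ) + Real.sin x • I - ((Real.cos y : ℍ) + Real.sin y • I)
      = ((Real.cos x - Real.cos y : ℝ) : ℍ) + (Real.sin x - Real.sin y) • I by
      push_cast [sub_smul]; abel,
    norm_sq_coe_add_smul_of_sq_eq_neg_one hI, Real.cos_sub]
  linear_combination Real.sin_sq_add_cos_sq x + Real.sin_sq_add_cos_sq y

end Slice

theorem Real.cos_two_pi_div_three : Real.cos (2 * Real.pi / 3) = -(1 / 2) := by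
  rw [show 2 * Real.pi / 3 = Real.pi - Real.pi / 3 by ring, Real.cos_pi_sub, Real.cos_pi_div_three]

theorem Real.cos_four_pi_div_three : Real.cos (4 * Real.pi / 3) = -(1 / 2) := by
  rw [show 4 * Real.pi / 3 = Real.pi / 3 + Real.pi by ring, Real.cos_add_pi,
    Real.cos_pi_div_three]

/-- The `3`-diameter of the unit ball `𝔹 ⊂ ℍ` is attained at (rotated) cube roots of unity
on any slice: for every imaginary unit `I` and every `u` with `|u| = 1`, setting
`α_j = u (cos(2πj/3) + sin(2πj/3) I)`, one has
`d₃(𝔹) = (|α₂ − α₁| |α₃ − α₁| |α₃ − α₂|)^{1/3}`; in particular `d₃(𝔹) = √3`. -/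
theorem d3_ball_eq_roots_of_unity (I : ℍ) (hI : I ^ 2 = -1) (u : ℍ) (hu : ‖u‖ = 1)
    (α : ℕ → ℍ)
    (hα : ∀ j : ℕ, α j =
      u * (((Real.cos (2 * Real.pi * j / 3) : ℝ) : ℍ) + Real.sin (2 * Real.pi * j / 3) • I)) :
    nDiamReal 3 (Metric.ball 0 1) = (‖α 2 - α 1‖ * ‖α 3 - α 1‖ * ‖α 3 - α 2‖) ^ ((1 : ℝ) / 3) ∧
      nDiamReal 3 (Metric.ball 0 1) = Real.sqrt 3 := by
  have hnorm : ∀ j, ‖α j‖ = 1 := fun j => by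
    have h := Quaternion.norm_sq_coe_add_smul_of_sq_eq_neg_one hI
      (Real.cos (2 * Real.pi * j / 3)) (Real.sin (2 * Real.pi * j / 3))
    rw [Real.cos_sq_add_sin_sq, pow_eq_one_iff_of_nonneg (norm_nonneg _) two_ne_zero] at h
    rw [hα, norm_mul, hu, h, one_mul]
  have hdist : ∀ j k : ℕ, Real.cos (2 * Real.pi * k / 3 - 2 * Real.pi * j / 3) = -(1 / 2) →
      ‖α k - α j‖ = Real.sqrt 3 := fun j k hcos => by
    rw [← Real.sqrt_sq (norm_nonneg _), hα, hα,
      Quaternion.norm_sq_mul_sub_mul_of_sq_eq_neg_one hI hu, hcos]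
    norm_num
  have h21 := hdist 1 2 (by convert Real.cos_two_pi_div_three using 2; push_cast; ring)
  have h31 := hdist 1 3 (by convert Real.cos_four_pi_div_three using 2; push_cast; ring)
  have h32 := hdist 2 3 (by convert Real.cos_two_pi_div_three using 2; push_cast; ring)
  have hprod : ‖α 2 - α 1‖ * ‖α 3 - α 1‖ * ‖α 3 - α 2‖ = Real.sqrt 3 ^ 3 := by
    rw [h21, h31, h32]; ring
  have hd3 := nDiamReal_three_ball_eq_sqrt_three (hnorm 1).le (hnorm 2).le (hnorm 3).le hprod
  refine ⟨?_, hd3⟩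
  rw [hd3, hprod, Real.pow_three_rpow_one_div_three (Real.sqrt_nonneg 3)]
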